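/- arXiv:2307.03848 — 5 statements merged into one kernel-verified Lean document; each statement's English description precedes it below -/
import Mathlib

section
/- Let n ∈ ℕ, ε ∈ (0,1), and let F ⊆ {0,1}^{[2n]} be a finite set of binary functions on [2n]. For σ drawn uniformly from Γ_n: Pr[ ∃ f ∈ F such that f(σ(i)) = 0 for all i ∈ [n] and |{ i ∈ [n] : f(σ(n+i)) = 1 }| ≥ εn/2 ] ≤ |F| · 2^{−εn/2}. -/
open scoped Classical

namespace RealizableRegression

/-- The first half embedding `[n] → [2n]`, `i ↦ i`. -/
def finL (n : ℕ) (i : Fin n) : Fin (2 * n) := ⟨i.1, by have := i.2; omega⟩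

/-- The second half embedding `[n] → [2n]`, `i ↦ n + i`. -/
def finR (n : ℕ) (i : Fin n) : Fin (2 * n) := ⟨n + i.1, by have := i.2; omega⟩

/-- `Γ_n`: the `2^n` permutations of `[2n]` that, for each `i ∈ [n]`, either fix both
`i` and `n+i` or swap them. -/
def swapPerms (n : ℕ) : Finset (Equiv.Perm (Fin (2 * n))) :=
  Finset.univ.filter fun σ => ∀ i : Fin n,
    (σ (finL n i) = finL n i ∧ σ (finR n i) = finR n i) ∨
    (σ (finL n i) = finR n i ∧ σ (finR n i) = finL n i)

def swapFun (n : ℕ) (b : Fin n → Bool) (j : Fin (2 * n)) : Fin (2 * n) :=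
  if h : j.1 < n then (if b ⟨j.1, h⟩ then ⟨n + j.1, by omega⟩ else j)
  else (if b ⟨j.1 - n, by have := j.2; omega⟩ then ⟨j.1 - n, by have := j.2; omega⟩ else j)

lemma swapFun_invol (n : ℕ) (b : Fin n → Bool) : Function.Involutive (swapFun n b) := by
  intro j
  have hj := j.2
  by_cases h : j.1 < n
  · by_cases hb : b ⟨j.1, h⟩
    · have h1 : swapFun n b j = ⟨n + j.1, by omega⟩ := by
        simp [swapFun, h, hb]
      rw [h1]
      have h2 : ¬ (n + j.1 < n) := by omega
      have h3 : n + j.1 - n = j.1 := by omega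
      simp only [swapFun, h2, dif_neg, not_false_iff]
      simp only [h3]
      simp [hb]
    · have h1 : swapFun n b j = j := by simp [swapFun, h, hb]
      rw [h1, h1]
  · by_cases hb : b ⟨j.1 - n, by omega⟩
    · have h2 : j.1 - n < n := by omega
      have e1 : swapFun n b j = ⟨j.1 - n, by omega⟩ := by
        rw [swapFun, dif_neg h, if_pos hb]
      have e2 : swapFun n b ⟨j.1 - n, by omega⟩ = ⟨n + (j.1 - n), by omega⟩ := by
        rw [swapFun, dif_pos h2, if_pos hb]
      rw [e1, e2]
      exact Fin.ext (by simp; omega)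
    · have h1 : swapFun n b j = j := by
        simp only [swapFun, h, dif_neg, not_false_iff]
        simp [hb]
      rw [h1, h1]

def toPerm (n : ℕ) (b : Fin n → Bool) : Equiv.Perm (Fin (2 * n)) :=
  (swapFun_invol n b).toPerm

lemma toPerm_finL (n : ℕ) (b : Fin n → Bool) (i : Fin n) :
    toPerm n b (finL n i) = if b i then finR n i else finL n i := by
  have hi := i.2
  simp only [toPerm, Function.Involutive.coe_toPerm, swapFun, finL, finR]
  simp [hi]

lemma toPerm_finR (n : ℕ) (b : Fin n → Bool) (i : Fin n) :
    toPerm n b (finR n i) = if b i then finL n i else finR n i := by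
  have hi := i.2
  have h2 : ¬ (n + i.1 < n) := by omega
  have h3 : n + i.1 - n = i.1 := by omega
  simp only [toPerm, Function.Involutive.coe_toPerm, swapFun, finL, finR, h2, dif_neg,
    not_false_iff, h3]

lemma finL_ne_finR (n : ℕ) (i j : Fin n) : finL n i ≠ finR n j := by
  intro h
  have := congrArg Fin.val h
  simp [finL, finR] at this
  omega

lemma toPerm_injective (n : ℕ) : Function.Injective (toPerm n) := by
  intro b b' h
  funext i
  have h1 : toPerm n b (finL n i) = toPerm n b' (finL n i) := by rw [h]
  rw [toPerm_finL, toPerm_finL] at h1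
  by_cases hb : b i <;> by_cases hb' : b' i <;> simp [hb, hb'] at h1 ⊢
  · exact (finL_ne_finR n i i h1.symm).elim
  · exact (finL_ne_finR n i i h1).elim

lemma mem_image_toPerm (n : ℕ) : swapPerms n = Finset.image (toPerm n) Finset.univ := by
  ext σ
  simp only [swapPerms, Finset.mem_filter, Finset.mem_univ, true_and, Finset.mem_image]
  constructor
  · intro hσ
    refine ⟨fun i => decide (σ (finL n i) = finR n i), ?_⟩
    apply Equiv.ext
    intro j
    have hj2 := j.2
    have key : ∀ i : Fin n, toPerm n (fun i => decide (σ (finL n i) = finR n i)) (finL n i) = σ (finL n i)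
        ∧ toPerm n (fun i => decide (σ (finL n i) = finR n i)) (finR n i) = σ (finR n i) := by
      intro i
      rw [toPerm_finL, toPerm_finR]
      rcases hσ i with ⟨h1, h2⟩ | ⟨h1, h2⟩
      · have : ¬ (σ (finL n i) = finR n i) := by
          rw [h1]; exact finL_ne_finR n i i
        simp only [decide_eq_true_eq]
        simp [this, h1, h2]
        exact fun hh => hh.symm
      · simp [h1, h2]
    by_cases h : j.1 < n
    · have : j = finL n ⟨j.1, h⟩ := Fin.ext rfl
      rw [this]; exact (key _).1
    · have : j = finR n ⟨j.1 - n, by omega⟩ := Fin.ext (by simp [finR]; omega)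
      rw [this]; exact (key _).2
  · rintro ⟨b, rfl⟩
    intro i
    rw [toPerm_finL, toPerm_finR]
    by_cases hb : b i <;> simp [hb]

lemma card_swapPerms (n : ℕ) : (swapPerms n).card = 2 ^ n := by
  rw [mem_image_toPerm, Finset.card_image_of_injective _ (toPerm_injective n)]
  simp

lemma card_filter_forced (n : ℕ) (B : Finset (Fin n)) (g : Fin n → Bool) :
    (Finset.univ.filter fun b : Fin n → Bool => ∀ i ∈ B, b i = g i).card ≤ 2 ^ (n - B.card) := by
  have h := Finset.card_le_card_of_injOn
    (s := Finset.univ.filter fun b : Fin n → Bool => ∀ i ∈ B, b i = g i)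
    (f := fun (b : Fin n → Bool) (j : {x : Fin n // x ∈ Finset.univ \ B}) => b j.1)
    (t := (Finset.univ : Finset ({x : Fin n // x ∈ Finset.univ \ B} → Bool)))
    (fun b _ => Finset.mem_univ _) ?_
  · refine le_trans h (le_of_eq ?_)
    rw [Finset.card_univ, Fintype.card_fun, Fintype.card_coe,
      Finset.card_sdiff_of_subset (Finset.subset_univ B), Finset.card_univ, Fintype.card_fin,
      Fintype.card_bool]
  · intro b hb b' hb' hbb
    simp only [Finset.mem_coe, Finset.mem_filter, Finset.mem_univ, true_and] at hb hb'
    funext i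
    by_cases hiB : i ∈ B
    · rw [hb i hiB, hb' i hiB]
    · exact congrFun hbb ⟨i, by simp [hiB]⟩

lemma perF (n : ℕ) (ε : ℝ) (hε0 : 0 ≤ ε) (f : Fin (2 * n) → Bool) :
    ((Finset.univ.filter fun b : Fin n → Bool =>
        (∀ i : Fin n, f (toPerm n b (finL n i)) = false) ∧
        ε * n / 2 ≤
          ((Finset.univ.filter fun i : Fin n =>
            f (toPerm n b (finR n i)) = true).card : ℝ)).card : ℝ)
      ≤ (2:ℝ) ^ n * (2:ℝ) ^ (-(ε * ↑n / 2)) := by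
  set c := ε * (n:ℝ) / 2 with hc
  have hc0 : 0 ≤ c := by positivity
  set B := Finset.univ.filter
    (fun i : Fin n => f (finL n i) = true ∨ f (finR n i) = true) with hB
  set s := Finset.univ.filter fun b : Fin n → Bool =>
        (∀ i : Fin n, f (toPerm n b (finL n i)) = false) ∧
        c ≤ ((Finset.univ.filter fun i : Fin n =>
            f (toPerm n b (finR n i)) = true).card : ℝ) with hs
  rcases s.eq_empty_or_nonempty with he | ⟨b0, hb0⟩
  · rw [he]
    simp
    positivity
  · simp only [hs, Finset.mem_filter, Finset.mem_univ, true_and] at hb0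
    obtain ⟨hb01, hb02⟩ := hb0
    -- B has many elements
    have hBc : c ≤ (B.card : ℝ) := by
      refine le_trans hb02 ?_
      have hsub : (Finset.univ.filter fun i : Fin n =>
          f (toPerm n b0 (finR n i)) = true) ⊆ B := by
        intro i hi
        simp only [Finset.mem_filter, Finset.mem_univ, true_and] at hi
        rw [toPerm_finR] at hi
        simp only [hB, Finset.mem_filter, Finset.mem_univ, true_and]
        cases hb : b0 i
        · rw [hb] at hi; simp at hi; exact Or.inr hi
        · rw [hb] at hi; simp at hi; exact Or.inl hi
      exact_mod_cast Finset.card_le_card hsub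
    -- forced bits
    have hsub2 : s ⊆ Finset.univ.filter fun b : Fin n → Bool =>
        ∀ i ∈ B, b i = f (finL n i) := by
      intro b hb
      simp only [hs, Finset.mem_filter, Finset.mem_univ, true_and] at hb ⊢
      obtain ⟨h1, _⟩ := hb
      intro i hi
      simp only [hB, Finset.mem_filter, Finset.mem_univ, true_and] at hi
      have h1i := h1 i
      rw [toPerm_finL] at h1i
      cases hb' : b i
      · rw [hb'] at h1i; simp at h1i; rw [h1i]
      · rw [hb'] at h1i; simp at h1i
        rcases hi with hi | hi
        · rw [hi]
        · rw [hi] at h1i; exact absurd h1i (by simp)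
    have hcard : s.card ≤ 2 ^ (n - B.card) :=
      le_trans (Finset.card_le_card hsub2) (card_filter_forced n B _)
    have hKn : B.card ≤ n := le_trans (Finset.card_le_univ B) (by simp)
    have hreal : ((2:ℝ)) ^ (n - B.card) ≤ (2:ℝ) ^ n * (2:ℝ) ^ (-c) := by
      rw [show ((2:ℝ)) ^ (n - B.card) = (2:ℝ) ^ (((n - B.card : ℕ) : ℝ)) from
        (Real.rpow_natCast _ _).symm,
        show ((2:ℝ)) ^ n = (2:ℝ) ^ ((n : ℕ) : ℝ) from (Real.rpow_natCast _ _).symm,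
        ← Real.rpow_add two_pos]
      apply Real.rpow_le_rpow_of_exponent_le one_le_two
      rw [Nat.cast_sub hKn]
      linarith
    calc (s.card : ℝ) ≤ ((2 ^ (n - B.card) : ℕ) : ℝ) := by exact_mod_cast hcard
      _ = (2:ℝ) ^ (n - B.card) := by push_cast; ring
      _ ≤ _ := hreal


/-- Union bound over random swaps: for a finite set `F` of binary
functions on `[2n]`, the probability over a uniform swapping permutation `σ ∈ Γ_n` that
some `f ∈ F` vanishes on the (swapped) first half while taking value `1` on at least
`εn/2` coordinates of the (swapped) second half is at most `|F| · 2^{−εn/2}`. -/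
theorem statement5 (n : ℕ) (ε : ℝ) (hε : ε ∈ Set.Ioo (0:ℝ) 1)
    (F : Finset (Fin (2 * n) → Bool)) :
    ((((swapPerms n).filter fun σ => ∃ f ∈ F,
          (∀ i : Fin n, f (σ (finL n i)) = false) ∧
          ε * n / 2 ≤
            ((Finset.univ.filter fun i : Fin n => f (σ (finR n i)) = true).card : ℝ)).card : ℝ)
        / ((swapPerms n).card : ℝ))
      ≤ (F.card : ℝ) * (2:ℝ) ^ (-(ε * n / 2)) := by
  obtain ⟨hε0, _⟩ := hε
  have hcards : ((swapPerms n).card : ℝ) = (2:ℝ) ^ n := by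
    rw [card_swapPerms]; push_cast; ring
  have hpos : (0:ℝ) < ((swapPerms n).card : ℝ) := by rw [hcards]; positivity
  rw [div_le_iff₀ hpos]
  -- rewrite the filtered card over b
  have hfilter : ((swapPerms n).filter fun σ => ∃ f ∈ F,
          (∀ i : Fin n, f (σ (finL n i)) = false) ∧
          ε * n / 2 ≤
            ((Finset.univ.filter fun i : Fin n => f (σ (finR n i)) = true).card : ℝ)).card
      = (Finset.univ.filter fun b : Fin n → Bool => ∃ f ∈ F,
          (∀ i : Fin n, f (toPerm n b (finL n i)) = false) ∧
          ε * n / 2 ≤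
            ((Finset.univ.filter fun i : Fin n =>
              f (toPerm n b (finR n i)) = true).card : ℝ)).card := by
    rw [mem_image_toPerm, Finset.filter_image,
      Finset.card_image_of_injective _ (toPerm_injective n)]
  rw [hfilter]
  have hunion : (Finset.univ.filter fun b : Fin n → Bool => ∃ f ∈ F,
          (∀ i : Fin n, f (toPerm n b (finL n i)) = false) ∧
          ε * n / 2 ≤
            ((Finset.univ.filter fun i : Fin n =>
              f (toPerm n b (finR n i)) = true).card : ℝ))
      ⊆ F.biUnion fun f => Finset.univ.filter fun b : Fin n → Bool =>
          (∀ i : Fin n, f (toPerm n b (finL n i)) = false) ∧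
          ε * n / 2 ≤
            ((Finset.univ.filter fun i : Fin n =>
              f (toPerm n b (finR n i)) = true).card : ℝ) := by
    intro b hb
    simp only [Finset.mem_filter, Finset.mem_univ, true_and, Finset.mem_biUnion] at hb ⊢
    obtain ⟨f, hf, hq⟩ := hb
    exact ⟨f, hf, hq⟩
  calc ((Finset.univ.filter fun b : Fin n → Bool => ∃ f ∈ F,
          (∀ i : Fin n, f (toPerm n b (finL n i)) = false) ∧
          ε * n / 2 ≤
            ((Finset.univ.filter fun i : Fin n =>
              f (toPerm n b (finR n i)) = true).card : ℝ)).card : ℝ)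
      ≤ ((F.biUnion fun f => Finset.univ.filter fun b : Fin n → Bool =>
          (∀ i : Fin n, f (toPerm n b (finL n i)) = false) ∧
          ε * n / 2 ≤
            ((Finset.univ.filter fun i : Fin n =>
              f (toPerm n b (finR n i)) = true).card : ℝ)).card : ℝ) := by
        exact_mod_cast Finset.card_le_card hunion
    _ ≤ ∑ f ∈ F, ((Finset.univ.filter fun b : Fin n → Bool =>
          (∀ i : Fin n, f (toPerm n b (finL n i)) = false) ∧
          ε * n / 2 ≤
            ((Finset.univ.filter fun i : Fin n =>
              f (toPerm n b (finR n i)) = true).card : ℝ)).card : ℝ) := by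
        exact_mod_cast Finset.card_biUnion_le
    _ ≤ ∑ _f ∈ F, (2:ℝ) ^ n * (2:ℝ) ^ (-(ε * ↑n / 2)) :=
        Finset.sum_le_sum fun f _ => perF n ε (le_of_lt hε0) f
    _ = (F.card : ℝ) * (2:ℝ) ^ (-(ε * ↑n / 2)) * ((swapPerms n).card : ℝ) := by
        rw [Finset.sum_const, hcards]
        simp [nsmul_eq_mul]
        ring

end RealizableRegression
end

section
/- (Online realizable regression, lower bound.) For every nonempty hypothesis class H ⊆ [0,1]^X, every deterministic online learner f, and every real r < D^onl(H)/2, there exist T ∈ ℕ and a sequence (x_1,y_1),…,(x_T,y_T) in X × [0,1] realizable by H on which the cumulative loss of f satisfies Σ_{t=1}^T |ŷ_t − y_t| ≥ r, where ŷ_t = f((x_1,y_1),…,(x_{t−1},y_{t−1}), x_t). In particular, every deterministic online learner incurs cumulative loss at least D^onl(H)/2 − ε for every ε > 0. -/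
open scoped ENNReal

namespace RealizableRegression

/-- The prefix of length `ℓ` of the root-to-leaf path `y`. -/
def pathPref {d : ℕ} (y : Fin d → Bool) (ℓ : ℕ) : List Bool := (List.ofFn y).take ℓ

/-- `(x, s)` is a scaled Littlestone tree of depth `d` for `H`: nodes `x u ∈ X` for
positions `u ∈ {0,1}^{<d}`, edge labels `s u b ∈ [0,1]` for the edge from `u` to its
child `b`, such that for every path `y ∈ {0,1}^d` and every `n < d` there is `h ∈ H`
realizing the first `n+1` edge labels along `y`. -/
def IsSLTree {X : Type*} (H : Set (X → ℝ)) (d : ℕ)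
    (x : List Bool → X) (s : List Bool → Bool → ℝ) : Prop :=
  (∀ u b, s u b ∈ Set.Icc (0:ℝ) 1) ∧
    ∀ y : Fin d → Bool, ∀ n : ℕ, n < d → ∃ h ∈ H, ∀ ℓ : Fin d, (ℓ : ℕ) ≤ n →
      h (x (pathPref y ℓ)) = s (pathPref y ℓ) (y ℓ)

/-- The sum of the gaps `γ_u = |s_{u0} − s_{u1}|` along the path `y`. -/
noncomputable def pathGaps {d : ℕ} (s : List Bool → Bool → ℝ) (y : Fin d → Bool) : ℝ :=
  ∑ ℓ : Fin d, |s (pathPref y ℓ) false - s (pathPref y ℓ) true|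

/-- The online dimension `D^onl(H)`: the supremum over all finite-depth scaled
Littlestone trees of the infimum over root-to-leaf paths of the sum of the gaps. -/
noncomputable def onlDim {X : Type*} (H : Set (X → ℝ)) : ℝ≥0∞ :=
  ⨆ (d : ℕ) (x : List Bool → X) (s : List Bool → Bool → ℝ) (_ : IsSLTree H d x s),
    ⨅ y : Fin d → Bool, ENNReal.ofReal (pathGaps s y)

/-- The history `((x_1,y_1), …, (x_{t−1},y_{t−1}))` seen before round `t`. -/
def histBefore {X : Type*} {T : ℕ} (xs : Fin T → X) (ys : Fin T → ℝ) (t : Fin T) :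
    List (X × ℝ) :=
  List.ofFn fun i : Fin t.1 =>
    (xs ⟨i.1, i.2.trans t.2⟩, ys ⟨i.1, i.2.trans t.2⟩)


section Adversary

variable {X : Type*} (f : List (X × ℝ) → X → ℝ) (x : List Bool → X)
  (s : List Bool → Bool → ℝ)

/-- The adversary's choice of bit: the edge label farther from the prediction. -/
noncomputable def chooseBit (u : List Bool) (h : List (X × ℝ)) : Bool :=
  if |f h (x u) - s u false| ≤ |f h (x u) - s u true| then true else false

/-- The adversary's state after `t` rounds: the path prefix and the history. -/
noncomputable def advStep : ℕ → List Bool × List (X × ℝ)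
  | 0 => ([], [])
  | t + 1 =>
      let p := advStep t
      let b := chooseBit f x s p.1 p.2
      (p.1 ++ [b], p.2 ++ [(x p.1, s p.1 b)])

/-- The bit chosen at round `t`. -/
noncomputable def advBit (t : ℕ) : Bool :=
  chooseBit f x s (advStep f x s t).1 (advStep f x s t).2

lemma advStep_succ (t : ℕ) :
    advStep f x s (t + 1) =
      ((advStep f x s t).1 ++ [advBit f x s t],
        (advStep f x s t).2 ++
          [(x (advStep f x s t).1, s (advStep f x s t).1 (advBit f x s t))]) := rfl

lemma advStep_fst (t : ℕ) :
    (advStep f x s t).1 = List.ofFn (fun i : Fin t => advBit f x s i) := by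
  induction t with
  | zero => simp [advStep]
  | succ t ih =>
      rw [advStep_succ, List.ofFn_succ']
      simp [ih, List.concat_eq_append]

lemma advStep_snd (t : ℕ) :
    (advStep f x s t).2 = List.ofFn (fun i : Fin t =>
      (x (advStep f x s i).1, s (advStep f x s i).1 (advBit f x s i))) := by
  induction t with
  | zero => simp [advStep]
  | succ t ih =>
      rw [advStep_succ, List.ofFn_succ']
      simp [ih, List.concat_eq_append]

lemma chooseBit_loss (u : List Bool) (h : List (X × ℝ)) :
    |s u false - s u true| / 2 ≤ |f h (x u) - s u (chooseBit f x s u h)| := by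
  have htri : |s u false - s u true| ≤
      |f h (x u) - s u false| + |f h (x u) - s u true| := by
    have := abs_sub (f h (x u) - s u false) (f h (x u) - s u true)
    calc |s u false - s u true|
        = |(f h (x u) - s u true) - (f h (x u) - s u false)| := by ring_nf
      _ ≤ |f h (x u) - s u true| + |f h (x u) - s u false| := abs_sub _ _
      _ = |f h (x u) - s u false| + |f h (x u) - s u true| := by ring
  unfold chooseBit
  split_ifs with hc
  · linarith
  · push_neg at hc
    linarith

end Adversary

/-- Online realizable regression, lower bound: for every nonempty
class `H`, every deterministic online learner `f` (with predictions in `[0,1]`) and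
every `r` with `r < D^onl(H)/2`, there is a finite `H`-realizable sequence on which the
cumulative absolute loss of `f` is at least `r`. -/
theorem statement14 {X : Type*} (H : Set (X → ℝ)) (hne : H.Nonempty)
    (hH : ∀ h ∈ H, ∀ x, h x ∈ Set.Icc (0:ℝ) 1)
    (f : List (X × ℝ) → X → ℝ) (hf : ∀ l x, f l x ∈ Set.Icc (0:ℝ) 1)
    (r : ℝ) (hr : ENNReal.ofReal r < onlDim H / 2) :
    ∃ (T : ℕ) (xs : Fin T → X) (ys : Fin T → ℝ),
      (∀ t, ys t ∈ Set.Icc (0:ℝ) 1) ∧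
      (∀ t : Fin T, ∃ h ∈ H, ∀ τ : Fin T, τ ≤ t → h (xs τ) = ys τ) ∧
      r ≤ ∑ t : Fin T, |f (histBefore xs ys t) (xs t) - ys t| := by
  rcases le_or_gt r 0 with hr0 | hr0
  · exact ⟨0, Fin.elim0, Fin.elim0, fun t => t.elim0, fun t => t.elim0,
      by simpa using hr0⟩
  -- Extract a tree witnessing `2r < onlDim H`.
  have h2r : ENNReal.ofReal (2 * r) < onlDim H := by
    have h2 : ENNReal.ofReal (2 * r) = ENNReal.ofReal r * 2 := by
      rw [ENNReal.ofReal_mul (by norm_num : (0:ℝ) ≤ 2)]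
      rw [mul_comm]
      norm_num
    rw [h2]
    exact (ENNReal.lt_div_iff_mul_lt (Or.inl two_ne_zero)
      (Or.inl ENNReal.ofNat_ne_top)).mp hr
  rw [onlDim] at h2r
  simp only [lt_iSup_iff] at h2r
  obtain ⟨d, x, s, htree, hlt⟩ := h2r
  -- The adversary's path.
  set y : Fin d → Bool := fun ℓ => advBit f x s ℓ with hy
  have hpref : ∀ ℓ : ℕ, ℓ ≤ d → pathPref y ℓ = (advStep f x s ℓ).1 := by
    intro ℓ hℓ
    rw [advStep_fst, pathPref]
    apply List.ext_getElem
    · simp [hℓ]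
    · intro i h1 h2
      simp only [List.getElem_take, List.getElem_ofFn]
      rfl
  -- Gap bound along the adversary's path.
  have hgap : 2 * r < pathGaps s y := by
    have hle : ENNReal.ofReal (2 * r) < ENNReal.ofReal (pathGaps s y) := by
      refine hlt.trans_le ?_
      exact iInf_le _ y
    by_contra hcon
    push_neg at hcon
    exact absurd (ENNReal.ofReal_le_ofReal hcon) (not_le.mpr hle)
  refine ⟨d, fun t => x (pathPref y t), fun t => s (pathPref y t) (y t),
    fun t => htree.1 _ _, ?_, ?_⟩
  · -- realizability
    intro t
    obtain ⟨h, hhH, hh⟩ := htree.2 y t.1 t.2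
    exact ⟨h, hhH, fun τ hτ => hh τ hτ⟩
  · -- loss lower bound
    set xs : Fin d → X := fun t => x (pathPref y t) with hxs
    set ys : Fin d → ℝ := fun t => s (pathPref y t) (y t) with hys
    have hhist : ∀ t : Fin d, histBefore xs ys t = (advStep f x s t.1).2 := by
      intro t
      rw [advStep_snd, histBefore]
      apply List.ext_getElem
      · simp
      · intro i h1 h2
        simp only [List.length_ofFn] at h1
        have hil : i ≤ d := le_of_lt (h1.trans t.2)
        simp only [List.getElem_ofFn, hxs, hys, hy]
        rw [hpref i hil]
    have hterm : ∀ t : Fin d,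
        |s (pathPref y t) false - s (pathPref y t) true| / 2 ≤
          |f (histBefore xs ys t) (xs t) - ys t| := by
      intro t
      rw [hhist t]
      have := chooseBit_loss f x s (advStep f x s t.1).1 (advStep f x s t.1).2
      have hp : pathPref y t.1 = (advStep f x s t.1).1 := hpref t.1 (le_of_lt t.2)
      simp only [hxs, hys, hp]
      exact this
    calc r = (2 * r) / 2 := by ring
      _ ≤ pathGaps s y / 2 := by linarith
      _ = ∑ t : Fin d, |s (pathPref y t) false - s (pathPref y t) true| / 2 := by
          rw [pathGaps, Finset.sum_div]
      _ ≤ ∑ t : Fin d, |f (histBefore xs ys t) (xs t) - ys t| :=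
          Finset.sum_le_sum fun t _ => hterm t

end RealizableRegression
end

section
/- (Recursive inequality for the online dimension.) For every hypothesis class H ⊆ [0,1]^X, every x ∈ X, and all y, y' ∈ [0,1] such that the version spaces H_{(x,y)} = {h ∈ H : h(x) = y} and H_{(x,y')} = {h ∈ H : h(x) = y'} are both nonempty: D^onl(H) ≥ |y − y'| + min( D^onl(H_{(x,y)}), D^onl(H_{(x,y')}) ). -/
open scoped ENNReal

namespace RealizableRegression

lemma pathGaps_nonneg {d : ℕ} (s : List Bool → Bool → ℝ) (z : Fin d → Bool) :
    0 ≤ pathGaps s z :=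
  Finset.sum_nonneg fun _ _ => abs_nonneg _

lemma pathPref_take {d : ℕ} (z : Fin d → Bool) {ℓ k : ℕ} (h : ℓ ≤ k) :
    (pathPref z k).take ℓ = pathPref z ℓ := by
  simp [pathPref, List.take_take, Nat.min_eq_left h]

lemma pathPref_length {d : ℕ} (z : Fin d → Bool) {ℓ : ℕ} (h : ℓ ≤ d) :
    (pathPref z ℓ).length = ℓ := by
  simp [pathPref, h]

lemma pathPref_getD {d : ℕ} (z : Fin d → Bool) {k ℓ : ℕ} (h : ℓ < k) (hk : k ≤ d) :
    (pathPref z k).getD ℓ false = z ⟨ℓ, h.trans_le hk⟩ := by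
  have hl : ℓ < (pathPref z k).length := by simp [pathPref]; omega
  rw [List.getD_eq_getElem _ _ hl]
  simp [pathPref]

lemma pathPref_castLE {d d' : ℕ} (h : d ≤ d') (z : Fin d' → Bool) {ℓ : ℕ} (hl : ℓ ≤ d) :
    pathPref z ℓ = pathPref (fun i : Fin d => z (Fin.castLE h i)) ℓ := by
  apply List.ext_getElem
  · simp [pathPref]; omega
  · intro i h1 h2
    simp [pathPref]

/-- Padding a scaled Littlestone tree to a larger depth without decreasing the
infimum of path gap sums. -/
lemma pad_tree {X : Type*} {H : Set (X → ℝ)} (hne : H.Nonempty)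
    (hH : ∀ h ∈ H, ∀ z, h z ∈ Set.Icc (0:ℝ) 1)
    {d d' : ℕ} (hdd' : d ≤ d')
    {x : List Bool → X} {s : List Bool → Bool → ℝ} (hs : IsSLTree H d x s) :
    ∃ s' : List Bool → Bool → ℝ, IsSLTree H d' x s' ∧
      (⨅ z : Fin d → Bool, ENNReal.ofReal (pathGaps s z)) ≤
        ⨅ z : Fin d' → Bool, ENNReal.ofReal (pathGaps s' z) := by
  classical
  set P : List Bool → Prop := fun u =>
    ∃ f, f ∈ H ∧ ∀ ℓ : Fin d, f (x (u.take ℓ)) = s (u.take ℓ) (u.getD ℓ false) with hP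
  set g : List Bool → X → ℝ := fun u => if h : P u then h.choose else hne.choose with hg
  have hgH : ∀ u, g u ∈ H := by
    intro u
    show (if h : P u then h.choose else hne.choose) ∈ H
    split
    · exact (Exists.choose_spec ‹P u›).1
    · exact hne.choose_spec
  set s' : List Bool → Bool → ℝ :=
    fun u b => if u.length < d then s u b else g (u.take d) (x u) with hs'
  have hlen : ∀ (z : Fin d' → Bool) (ℓ : ℕ), ℓ ≤ d' → (pathPref z ℓ).length = ℓ :=
    fun z ℓ h => pathPref_length z h
  have hs'lt : ∀ (u : List Bool) (b : Bool), u.length < d → s' u b = s u b := by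
    intro u b hu
    show (if u.length < d then s u b else g (u.take d) (x u)) = s u b
    rw [if_pos hu]
  have hs'ge : ∀ (u : List Bool) (b : Bool), d ≤ u.length →
      s' u b = g (u.take d) (x u) := by
    intro u b hu
    show (if u.length < d then s u b else g (u.take d) (x u)) = g (u.take d) (x u)
    rw [if_neg (not_lt.mpr hu)]
  refine ⟨s', ⟨?_, ?_⟩, ?_⟩
  · intro u b
    by_cases hu : u.length < d
    · rw [hs'lt u b hu]; exact hs.1 u b
    · rw [hs'ge u b (not_lt.mp hu)]; exact hH _ (hgH _) _
  · intro z n hn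
    set zres : Fin d → Bool := fun i => z (Fin.castLE hdd' i) with hzres
    have hpref : ∀ ℓ : ℕ, ℓ ≤ d → pathPref z ℓ = pathPref zres ℓ :=
      fun ℓ h => pathPref_castLE hdd' z h
    by_cases hnd : n < d
    · obtain ⟨h, hhH, hh⟩ := hs.2 zres n hnd
      refine ⟨h, hhH, ?_⟩
      intro ℓ hℓ
      have hld : (ℓ : ℕ) < d := lt_of_le_of_lt hℓ hnd
      rw [hs'lt _ _ (by rw [hlen z ℓ ℓ.2.le]; exact hld), hpref ℓ hld.le]
      have := hh ⟨(ℓ : ℕ), hld⟩ hℓ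
      have hzz : zres ⟨(ℓ : ℕ), hld⟩ = z ℓ := rfl
      rwa [hzz] at this
    · push_neg at hnd
      have hPz : P (pathPref z d) := by
        rcases Nat.eq_zero_or_pos d with hd0 | hd0
        · exact ⟨hne.choose, hne.choose_spec, fun ℓ => absurd ℓ.2 (by omega)⟩
        · obtain ⟨h, hhH, hh⟩ := hs.2 zres (d - 1) (by omega)
          refine ⟨h, hhH, ?_⟩
          intro ℓ
          have h1 : (pathPref z d).take ℓ = pathPref z ℓ := pathPref_take z ℓ.2.le
          have h2 : (pathPref z d).getD ℓ false = zres ℓ := pathPref_getD z ℓ.2 hdd'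
          rw [h1, h2, hpref ℓ ℓ.2.le]
          exact hh ℓ (by omega)
      refine ⟨hPz.choose, hPz.choose_spec.1, ?_⟩
      have hgeq : g (pathPref z d) = hPz.choose := by
        show (if h : P (pathPref z d) then h.choose else hne.choose) = hPz.choose
        rw [dif_pos hPz]
      intro ℓ hℓ
      by_cases hld : (ℓ : ℕ) < d
      · rw [hs'lt _ _ (by rw [hlen z ℓ ℓ.2.le]; exact hld)]
        have h1 : (pathPref z d).take ℓ = pathPref z ℓ := pathPref_take z hld.le
        have h2 : (pathPref z d).getD ℓ false = zres ⟨(ℓ : ℕ), hld⟩ :=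
          pathPref_getD z hld hdd'
        have := hPz.choose_spec.2 ⟨(ℓ : ℕ), hld⟩
        rw [h1, h2] at this
        have hzz : zres ⟨(ℓ : ℕ), hld⟩ = z ℓ := rfl
        rwa [hzz] at this
      · push_neg at hld
        rw [hs'ge _ _ (by rw [hlen z ℓ ℓ.2.le]; exact hld), pathPref_take z hld, hgeq]
  · refine le_iInf fun z => ?_
    set zres : Fin d → Bool := fun i => z (Fin.castLE hdd' i) with hzres
    refine iInf_le_of_le zres (ENNReal.ofReal_le_ofReal ?_)
    unfold pathGaps
    calc (∑ ℓ : Fin d, |s (pathPref zres ℓ) false - s (pathPref zres ℓ) true|)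
        = ∑ ℓ : Fin d, |s' (pathPref z ((Fin.castLE hdd' ℓ) : ℕ)) false -
            s' (pathPref z ((Fin.castLE hdd' ℓ) : ℕ)) true| := by
          refine Finset.sum_congr rfl fun ℓ _ => ?_
          have hc : ((Fin.castLE hdd' ℓ : Fin d') : ℕ) = (ℓ : ℕ) := rfl
          rw [hc, pathPref_castLE hdd' z ℓ.2.le]
          rw [hs'lt _ _ (by rw [pathPref_length zres ℓ.2.le]; exact ℓ.2),
            hs'lt _ _ (by rw [pathPref_length zres ℓ.2.le]; exact ℓ.2)]
      _ = ∑ ℓ ∈ Finset.univ.map (Fin.castLEEmb hdd'),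
            |s' (pathPref z (ℓ : ℕ)) false - s' (pathPref z (ℓ : ℕ)) true| := by
          rw [Finset.sum_map]
          rfl
      _ ≤ ∑ ℓ : Fin d', |s' (pathPref z (ℓ : ℕ)) false - s' (pathPref z (ℓ : ℕ)) true| :=
          Finset.sum_le_sum_of_subset_of_nonneg (Finset.subset_univ _)
            (fun _ _ _ => abs_nonneg _)

/-- Combining trees for the two version spaces into a tree for `H`. -/
lemma combine_tree {X : Type*} {H : Set (X → ℝ)}
    (x : X) (y y' : ℝ) (hy : y ∈ Set.Icc (0:ℝ) 1) (hy' : y' ∈ Set.Icc (0:ℝ) 1)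
    {d : ℕ} {x1 x2 : List Bool → X} {s1 s2 : List Bool → Bool → ℝ}
    (t1 : IsSLTree {h ∈ H | h x = y} d x1 s1)
    (t2 : IsSLTree {h ∈ H | h x = y'} d x2 s2)
    (h1 : {h ∈ H | h x = y}.Nonempty) (h2 : {h ∈ H | h x = y'}.Nonempty) :
    ENNReal.ofReal |y - y'| +
      min (⨅ z : Fin d → Bool, ENNReal.ofReal (pathGaps s1 z))
          (⨅ z : Fin d → Bool, ENNReal.ofReal (pathGaps s2 z)) ≤ onlDim H := by
  classical
  set X' : List Bool → X := fun u => match u with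
    | [] => x
    | b :: v => if b then x2 v else x1 v with hX'
  set S' : List Bool → Bool → ℝ := fun u b => match u with
    | [] => if b then y' else y
    | c :: v => if c then s2 v b else s1 v b with hS'
  have hpref0 : ∀ (z : Fin (d+1) → Bool), pathPref z 0 = [] := by
    intro z; simp [pathPref]
  have hprefS : ∀ (z : Fin (d+1) → Bool) (k : ℕ),
      pathPref z (k+1) = z 0 :: pathPref (fun i : Fin d => z i.succ) k := by
    intro z k
    rw [pathPref, pathPref, List.ofFn_succ, List.take_succ_cons]
  have htree : IsSLTree H (d+1) X' S' := by
    constructor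
    · intro u b
      match u with
      | [] => cases b <;> simp [hS', hy, hy']
      | c :: v => cases c <;> simp [hS', t1.1 v b, t2.1 v b]
    · intro z n hn
      set z' : Fin d → Bool := fun i => z i.succ with hz'
      have hkey : ∀ (h : X → ℝ), h ∈ H → h x = (if z 0 then y' else y) →
          (∀ ℓ : Fin d, (ℓ : ℕ) + 1 ≤ n →
            h (X' (z 0 :: pathPref z' ℓ)) = S' (z 0 :: pathPref z' ℓ) (z' ℓ)) →
          ∃ h ∈ H, ∀ ℓ : Fin (d+1), (ℓ : ℕ) ≤ n →
            h (X' (pathPref z ℓ)) = S' (pathPref z ℓ) (z ℓ) := by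
        intro h hhH hhx hrest
        refine ⟨h, hhH, ?_⟩
        intro ℓ hℓ
        cases hℓ0 : (ℓ : ℕ) with
        | zero =>
          rw [hpref0 z]
          have hz0 : z ℓ = z 0 := by congr 1; ext; exact hℓ0
          rw [hz0]
          simpa [hX', hS'] using hhx
        | succ k =>
          have hkd : k < d := by have := ℓ.2; omega
          rw [hprefS z k]
          have hzℓ : z ℓ = z' ⟨k, hkd⟩ := by
            show z ℓ = z (Fin.succ ⟨k, hkd⟩)
            congr 1
            ext
            simp [hℓ0]
          rw [hzℓ]
          exact hrest ⟨k, hkd⟩ (show k + 1 ≤ n by omega)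
      cases n with
      | zero =>
        cases hz0 : z 0 with
        | false =>
          obtain ⟨h, hh⟩ := h1
          exact hkey h hh.1 (by rw [hz0]; simpa using hh.2)
            (fun ℓ hℓ => absurd hℓ (by omega))
        | true =>
          obtain ⟨h, hh⟩ := h2
          exact hkey h hh.1 (by rw [hz0]; simpa using hh.2)
            (fun ℓ hℓ => absurd hℓ (by omega))
      | succ m =>
        have hmd : m < d := by omega
        cases hz0 : z 0 with
        | false =>
          obtain ⟨h, ⟨hhH, hhx⟩, hh⟩ := t1.2 z' m hmd
          refine hkey h hhH (by rw [hz0]; simpa using hhx) ?_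
          intro ℓ hℓ
          have := hh ℓ (by omega)
          simpa [hX', hS', hz0] using this
        | true =>
          obtain ⟨h, ⟨hhH, hhx⟩, hh⟩ := t2.2 z' m hmd
          refine hkey h hhH (by rw [hz0]; simpa using hhx) ?_
          intro ℓ hℓ
          have := hh ℓ (by omega)
          simpa [hX', hS', hz0] using this
  have hmono : ENNReal.ofReal |y - y'| +
      min (⨅ z : Fin d → Bool, ENNReal.ofReal (pathGaps s1 z))
          (⨅ z : Fin d → Bool, ENNReal.ofReal (pathGaps s2 z)) ≤
        ⨅ z : Fin (d+1) → Bool, ENNReal.ofReal (pathGaps S' z) := by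
    refine le_iInf fun z => ?_
    set z' : Fin d → Bool := fun i => z i.succ with hz'
    have hterm0 : |S' (pathPref z ((0 : Fin (d+1)) : ℕ)) false -
        S' (pathPref z ((0 : Fin (d+1)) : ℕ)) true| = |y - y'| := by
      have : ((0 : Fin (d+1)) : ℕ) = 0 := rfl
      rw [this, hpref0 z]
      simp [hS']
    cases hz0 : z 0 with
    | false =>
      have hsum : pathGaps S' z = |y - y'| + pathGaps s1 z' := by
        unfold pathGaps
        rw [Fin.sum_univ_succ, hterm0]
        congr 1
        refine Finset.sum_congr rfl fun ℓ _ => ?_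
        have hc : ((ℓ.succ : Fin (d+1)) : ℕ) = (ℓ : ℕ) + 1 := rfl
        rw [hc, hprefS z ℓ, hz0]
        simp [hS']
        rfl
      rw [hsum, ENNReal.ofReal_add (abs_nonneg _) (pathGaps_nonneg _ _)]
      exact add_le_add le_rfl ((min_le_left _ _).trans (iInf_le _ _))
    | true =>
      have hsum : pathGaps S' z = |y - y'| + pathGaps s2 z' := by
        unfold pathGaps
        rw [Fin.sum_univ_succ, hterm0]
        congr 1
        refine Finset.sum_congr rfl fun ℓ _ => ?_
        have hc : ((ℓ.succ : Fin (d+1)) : ℕ) = (ℓ : ℕ) + 1 := rfl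
        rw [hc, hprefS z ℓ, hz0]
        simp [hS']
        rfl
      rw [hsum, ENNReal.ofReal_add (abs_nonneg _) (pathGaps_nonneg _ _)]
      exact add_le_add le_rfl ((min_le_right _ _).trans (iInf_le _ _))
  refine hmono.trans ?_
  exact le_iSup_of_le (d+1) (le_iSup_of_le X' (le_iSup_of_le S' (le_iSup_of_le htree le_rfl)))

lemma add_forall_lt_le {a b D : ℝ≥0∞} (ha : a ≤ D) (h : ∀ m, m < b → a + m ≤ D) :
    a + b ≤ D := by
  by_contra hc
  push_neg at hc
  obtain ⟨r, hDr, hrab⟩ := exists_between hc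
  have hrD : r ≤ D := by
    rcases le_or_gt r a with h' | h'
    · exact h'.trans ha
    · have hra : r - a < b := by
        have hatop : a ≠ ⊤ := (h'.trans_le le_top).ne
        rw [ENNReal.sub_lt_iff_lt_right hatop h'.le, add_comm]
        exact hrab
      have := h (r - a) hra
      rwa [add_tsub_cancel_of_le h'.le] at this
  exact absurd hrD (not_le.mpr hDr)

/-- Recursive inequality for the online dimension: for every class
`H ⊆ [0,1]^X`, every `x ∈ X` and all `y, y' ∈ [0,1]` whose version spaces
`H_{(x,y)}`, `H_{(x,y')}` are nonempty,
`D^onl(H) ≥ |y − y'| + min(D^onl(H_{(x,y)}), D^onl(H_{(x,y')}))`. -/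
theorem statement15 {X : Type*} (H : Set (X → ℝ))
    (hH : ∀ h ∈ H, ∀ x, h x ∈ Set.Icc (0:ℝ) 1)
    (x : X) (y y' : ℝ) (hy : y ∈ Set.Icc (0:ℝ) 1) (hy' : y' ∈ Set.Icc (0:ℝ) 1)
    (h1 : {h ∈ H | h x = y}.Nonempty) (h2 : {h ∈ H | h x = y'}.Nonempty) :
    ENNReal.ofReal |y - y'| +
        min (onlDim {h ∈ H | h x = y}) (onlDim {h ∈ H | h x = y'})
      ≤ onlDim H := by
  classical
  have hH1 : ∀ h ∈ {h ∈ H | h x = y}, ∀ z, h z ∈ Set.Icc (0:ℝ) 1 :=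
    fun h hh z => hH h hh.1 z
  have hH2 : ∀ h ∈ {h ∈ H | h x = y'}, ∀ z, h z ∈ Set.Icc (0:ℝ) 1 :=
    fun h hh z => hH h hh.1 z
  have htriv1 : IsSLTree {h ∈ H | h x = y} 0 (fun _ => x) (fun _ _ => 0) :=
    ⟨fun _ _ => ⟨le_rfl, zero_le_one⟩, fun _ n hn => absurd hn (by omega)⟩
  have htriv2 : IsSLTree {h ∈ H | h x = y'} 0 (fun _ => x) (fun _ _ => 0) :=
    ⟨fun _ _ => ⟨le_rfl, zero_le_one⟩, fun _ n hn => absurd hn (by omega)⟩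
  refine add_forall_lt_le ?_ ?_
  · have hcomb := combine_tree x y y' hy hy' htriv1 htriv2 h1 h2
    have h0 : ∀ z : Fin 0 → Bool, pathGaps (fun _ _ => (0:ℝ)) z = 0 := by
      intro z; unfold pathGaps; simp
    simp only [h0] at hcomb
    simpa using hcomb
  · intro m hm
    rw [lt_min_iff] at hm
    obtain ⟨hmA, hmB⟩ := hm
    rw [onlDim] at hmA hmB
    simp only [lt_iSup_iff] at hmA hmB
    obtain ⟨d1, x1, s1, t1, hm1⟩ := hmA
    obtain ⟨d2, x2, s2, t2, hm2⟩ := hmB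
    obtain ⟨s1', t1', hle1⟩ := pad_tree h1 hH1 (le_max_left d1 d2) t1
    obtain ⟨s2', t2', hle2⟩ := pad_tree h2 hH2 (le_max_right d1 d2) t2
    have hcomb := combine_tree x y y' hy hy' t1' t2' h1 h2
    refine le_trans ?_ hcomb
    refine add_le_add le_rfl (le_min ?_ ?_)
    · exact ((hm1.trans_le hle1).le).trans le_rfl
    · exact ((hm2.trans_le hle2).le).trans le_rfl

end RealizableRegression
end

section
/- (Good ERM learner for the scaled first Cantor class.) Fix d ∈ ℕ, γ ∈ (0,1), a finite set X_d with |X_d| = d, and an injective function f from the subsets of X_d into the interval (γ,1). For A ⊆ X_d define h_A : X_d → [0,1] by h_A(x) = f(A) if x ∈ A and h_A(x) = 0 otherwise, and let H = {h_A : A ⊆ X_d}. Let A_good be the learner that, given a labeled sample, outputs the all-zero function if every observed label is 0, and otherwise outputs the unique h_A consistent with an observed nonzero label. Then for every ε, δ ∈ (0,1), every m ≥ (1/ε)·log(1/δ), every probability distribution D on X_d, and every target h_{A*} ∈ H: with probability at least 1−δ over an i.i.d. sample S of m points from D labeled by h_{A*}, E_{x∼D}[ |A_good(S)(x) − h_{A*}(x)|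 ] ≤ ε. -/
open MeasureTheory
open scoped ENNReal

namespace RealizableRegression

/-- A learning algorithm: for each sample size `m`, maps a labeled sample to a predictor. -/
abbrev Learner (X : Type*) : Type _ := (m : ℕ) → (Fin m → X × ℝ) → X → ℝ

/-- The labeled training set obtained from unlabeled points `S` and target `h`. -/
def trainOn {X : Type*} {m : ℕ} (h : X → ℝ) (S : Fin m → X) : Fin m → X × ℝ :=
  fun i => (S i, h (S i))

/-- The hypothesis `h_A` of the scaled first Cantor class: `h_A(x) = f(A)` if `x ∈ A`
and `h_A(x) = 0` otherwise. -/
noncomputable def cantorH {X : Type*} (f : Set X → ℝ) (A : Set X) : X → ℝ :=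
  A.indicator fun _ => f A

/-- The specification of the good ERM learner `A_good`: on a sample all of whose labels
are `0` it outputs the all-zero function, and on a sample consistent with some `h_A`
containing a nonzero label it outputs (the unique such) `h_A`. -/
def GoodSpec {X : Type*} (f : Set X → ℝ) (Ag : Learner X) : Prop :=
  ∀ m (S : Fin m → X × ℝ),
    ((∀ i, (S i).2 = 0) → Ag m S = fun _ => 0) ∧
    (∀ A : Set X, (∀ i, (S i).2 = cantorH f A (S i).1) → (∃ i, (S i).2 ≠ 0) →
      Ag m S = cantorH f A)

/-- Good ERM learner for the scaled first Cantor class: for a finite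
domain of size `d`, `γ ∈ (0,1)` and an injective `f` with values in `(γ,1)`, any learner
satisfying the `A_good` specification has sample complexity `(1/ε) log(1/δ)`: for every
`m ≥ (1/ε) log(1/δ)`, every distribution and every target `h_{A*}`, with probability at
least `1 − δ` over the sample its expected absolute loss is at most `ε`. -/
theorem statement17 {X : Type*} [MeasurableSpace X] [Fintype X]
    (d : ℕ) (hcard : Fintype.card X = d) (γ : ℝ) (hγ : γ ∈ Set.Ioo (0:ℝ) 1)
    (f : Set X → ℝ) (hinj : Function.Injective f)
    (hrange : ∀ A : Set X, f A ∈ Set.Ioo γ 1)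
    (Ag : Learner X) (hAg : GoodSpec f Ag)
    (ε δ : ℝ) (hε : ε ∈ Set.Ioo (0:ℝ) 1) (hδ : δ ∈ Set.Ioo (0:ℝ) 1)
    (m : ℕ) (hm : (1 / ε) * Real.log (1 / δ) ≤ m)
    (μ : Measure X) [IsProbabilityMeasure μ] (Astar : Set X) :
    ENNReal.ofReal (1 - δ) ≤
      (Measure.pi fun _ : Fin m => μ)
        {S | ∫ x, |Ag m (trainOn (cantorH f Astar) S) x - cantorH f Astar x| ∂μ
          ≤ ε} := by
  obtain ⟨hε0, hε1⟩ := hε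
  obtain ⟨hδ0, hδ1⟩ := hδ
  set c : ℝ := f Astar with hc
  have hcγ := hrange Astar
  have hc0 : 0 < c := lt_trans hγ.1 hcγ.1
  have hc1 : c < 1 := hcγ.2
  set h : X → ℝ := cantorH f Astar with hh
  have hpos : ∀ x, 0 ≤ h x := by
    intro x
    simp only [hh, cantorH]
    exact Set.indicator_nonneg (fun _ _ => le_of_lt hc0) x
  set G : Set (Fin m → X) :=
    {S | ∫ x, |Ag m (trainOn h S) x - h x| ∂μ ≤ ε} with hG
  -- If some sample point hits Astar, the learner is exact and loss is 0.
  have hhit : ∀ S : Fin m → X, (∃ i, S i ∈ Astar) → S ∈ G := by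
    intro S ⟨i, hi⟩
    have hcons : ∀ j, (trainOn h S j).2 = cantorH f Astar (trainOn h S j).1 := fun j => rfl
    have hne : ∃ j, (trainOn h S j).2 ≠ 0 := by
      refine ⟨i, ?_⟩
      simp only [trainOn, hh, cantorH, Set.indicator_of_mem hi]
      exact ne_of_gt hc0
    have := (hAg m (trainOn h S)).2 Astar hcons hne
    simp only [hG, Set.mem_setOf_eq, this, ← hh, sub_self, abs_zero, integral_zero]
    exact le_of_lt hε0
  -- If no sample point hits Astar, the loss is r := ∫ h.
  set r : ℝ := ∫ x, h x ∂μ with hr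
  have hmiss : ∀ S : Fin m → X, (∀ i, S i ∉ Astar) → r ≤ ε → S ∈ G := by
    intro S hS hrε
    have hz : ∀ i, (trainOn h S i).2 = 0 := by
      intro i
      simp only [trainOn, hh, cantorH, Set.indicator_of_notMem (hS i)]
    have := (hAg m (trainOn h S)).1 hz
    simp only [hG, Set.mem_setOf_eq, this, zero_sub, abs_neg]
    calc ∫ x, |h x| ∂μ = r := by
          rw [hr]; congr 1; funext x; exact abs_of_nonneg (hpos x)
      _ ≤ ε := hrε
  by_cases hcase : r ≤ ε
  · -- every sample is good
    have : G = Set.univ := by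
      ext S
      simp only [Set.mem_univ, iff_true]
      by_cases hx : ∃ i, S i ∈ Astar
      · exact hhit S hx
      · exact hmiss S (fun i hi => hx ⟨i, hi⟩) hcase
    rw [this]
    simp only [measure_univ]
    exact ENNReal.ofReal_le_one.mpr (by linarith)
  · -- r > ε : Astar is a.e. measurable with large measure
    push_neg at hcase
    have hint : Integrable h μ := by
      by_contra hni
      rw [hr, integral_undef hni] at hcase
      linarith
    obtain ⟨g', hg'sm, hg'ae⟩ := hint.aestronglyMeasurable
    set T : Set X := g' ⁻¹' {c} with hT
    have hTm : MeasurableSet T := hg'sm.measurable (measurableSet_singleton c)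
    have hnull : μ {x | h x ≠ g' x} = 0 := by
      have := hg'ae
      rwa [Filter.EventuallyEq, ae_iff] at this
    have hsub : (Astar \ T) ∪ (T \ Astar) ⊆ {x | h x ≠ g' x} := by
      rintro x (⟨hxA, hxT⟩ | ⟨hxT, hxA⟩)
      · intro hEq
        apply hxT
        simp only [hT, Set.mem_preimage, Set.mem_singleton_iff, ← hEq]
        simp [hh, cantorH, Set.indicator_of_mem hxA, hc]
      · intro hEq
        have : h x = 0 := by simp [hh, cantorH, Set.indicator_of_notMem hxA]
        have hgx : g' x = c := hxT
        rw [this, hgx] at hEq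
        exact (ne_of_gt hc0) hEq.symm
    have hΔnull : μ ((Astar \ T) ∪ (T \ Astar)) = 0 :=
      measure_mono_null hsub hnull
    -- h =ᵐ indicator of T
    have hhT : h =ᵐ[μ] T.indicator (fun _ => c) := by
      refine measure_mono_null ?_ hΔnull
      intro x hx
      simp only [Set.mem_setOf_eq] at hx
      by_cases hxA : x ∈ Astar <;> by_cases hxT : x ∈ T
      · exfalso; apply hx
        simp [hh, cantorH, Set.indicator_of_mem hxA, Set.indicator_of_mem hxT, hc]
      · exact Or.inl ⟨hxA, hxT⟩
      · exact Or.inr ⟨hxT, hxA⟩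
      · exfalso; apply hx
        simp [hh, cantorH, Set.indicator_of_notMem hxA, Set.indicator_of_notMem hxT]
    have hrT : r = (μ T).toReal * c := by
      rw [hr, integral_congr_ae hhT, integral_indicator_const c hTm]
      simp [smul_eq_mul, mul_comm, Measure.real]
    have hμT : ε < (μ T).toReal := by
      have h1 : (μ T).toReal * c ≤ (μ T).toReal * 1 := by
        apply mul_le_mul_of_nonneg_left (le_of_lt hc1) ENNReal.toReal_nonneg
      rw [mul_one] at h1
      linarith [hrT ▸ hcase]
    -- complement bound
    have hμTc : μ Tᶜ ≤ ENNReal.ofReal (1 - ε) := by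
      have hTfin : μ T ≠ ⊤ := measure_ne_top μ T
      have h1 : μ Tᶜ = 1 - μ T := prob_compl_eq_one_sub hTm
      rw [h1]
      have h2 : ENNReal.ofReal ε ≤ μ T := by
        rw [← ENNReal.ofReal_toReal hTfin]
        exact ENNReal.ofReal_le_ofReal (le_of_lt hμT)
      calc (1 : ℝ≥0∞) - μ T ≤ 1 - ENNReal.ofReal ε := tsub_le_tsub_left h2 1
        _ = ENNReal.ofReal (1 - ε) := by
            rw [← ENNReal.ofReal_one, ← ENNReal.ofReal_sub _ (le_of_lt hε0)]
    -- bad set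
    set N : Set X := toMeasurable μ ((Astar \ T) ∪ (T \ Astar)) with hN
    have hNm : MeasurableSet N := measurableSet_toMeasurable _ _
    have hNnull : μ N = 0 := by rw [hN, measure_toMeasurable]; exact hΔnull
    set B : Set X := Tᶜ ∪ N with hB
    have hBm : MeasurableSet B := hTm.compl.union hNm
    have hμB : μ B ≤ ENNReal.ofReal (1 - ε) := by
      calc μ B ≤ μ Tᶜ + μ N := measure_union_le _ _
        _ = μ Tᶜ := by rw [hNnull, add_zero]
        _ ≤ _ := hμTc
    have hAc : Astarᶜ ⊆ B := by
      intro x hx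
      by_cases hxT : x ∈ T
      · exact Or.inr (subset_toMeasurable _ _ (Or.inr ⟨hxT, hx⟩))
      · exact Or.inl hxT
    have hGc : Gᶜ ⊆ Set.pi Set.univ (fun _ : Fin m => B) := by
      intro S hS
      intro i _
      by_cases hmem : S i ∈ Astar
      · exact absurd (hhit S ⟨i, hmem⟩) hS
      · exact hAc hmem
    have hbad : (Measure.pi fun _ : Fin m => μ) Gᶜ ≤ ENNReal.ofReal δ := by
      calc (Measure.pi fun _ : Fin m => μ) Gᶜ
          ≤ (Measure.pi fun _ : Fin m => μ) (Set.pi Set.univ fun _ : Fin m => B) :=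
            measure_mono hGc
        _ = ∏ _i : Fin m, μ B := Measure.pi_pi _ _
        _ ≤ ∏ _i : Fin m, ENNReal.ofReal (1 - ε) :=
            Finset.prod_le_prod' (fun i _ => hμB)
        _ = ENNReal.ofReal (1 - ε) ^ m := by
            rw [Finset.prod_const, Finset.card_univ, Fintype.card_fin]
        _ = ENNReal.ofReal ((1 - ε) ^ m) := by
            rw [ENNReal.ofReal_pow (by linarith)]
        _ ≤ ENNReal.ofReal δ := by
            apply ENNReal.ofReal_le_ofReal
            calc (1 - ε) ^ m ≤ Real.exp (-ε) ^ m := by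
                  apply pow_le_pow_left₀ (by linarith)
                  linarith [Real.add_one_le_exp (-ε)]
              _ = Real.exp (-(ε * m)) := by
                  rw [← Real.exp_nat_mul]; ring_nf
              _ ≤ δ := by
                  rw [← Real.exp_log hδ0]
                  apply Real.exp_le_exp.mpr
                  have hlog : Real.log (1 / δ) ≤ ε * m := by
                    have := mul_le_mul_of_nonneg_left hm (le_of_lt hε0)
                    rw [← mul_assoc, mul_one_div, div_self (ne_of_gt hε0), one_mul] at this
                    exact this
                  rw [Real.log_div one_ne_zero (ne_of_gt hδ0), Real.log_one, zero_sub] at hlog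
                  linarith
    -- conclude
    have htot : (1 : ℝ≥0∞) ≤
        (Measure.pi fun _ : Fin m => μ) G + (Measure.pi fun _ : Fin m => μ) Gᶜ := by
      have := measure_union_le (μ := Measure.pi fun _ : Fin m => μ) G Gᶜ
      rwa [Set.union_compl_self, measure_univ] at this
    have : ENNReal.ofReal (1 - δ) = 1 - ENNReal.ofReal δ := by
      rw [← ENNReal.ofReal_one, ← ENNReal.ofReal_sub _ (le_of_lt hδ0)]
    rw [this]
    rw [tsub_le_iff_right]
    calc (1 : ℝ≥0∞) ≤ (Measure.pi fun _ : Fin m => μ) G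
          + (Measure.pi fun _ : Fin m => μ) Gᶜ := htot
      _ ≤ (Measure.pi fun _ : Fin m => μ) G + ENNReal.ofReal δ := by
          exact add_le_add le_rfl hbad


end RealizableRegression
end

section
/- (Fat-shattering of the example class.) Fix d ∈ ℕ, a set X, and a partition S_0,…,S_{d−1} of X. For b = (b_0,…,b_{d−1}) ∈ {0,1}^d define h_b : X → [0,1] by h_b(x) = (3/4)·Σ_{j=0}^{d−1} 1_{S_j}(x)·b_j + (1/8)·Σ_{k=0}^{d−1} b_k·2^{−k}, and let H_d = {h_b : b ∈ {0,1}^d}. Then: (i) for every γ ∈ (0, 1/4] and every choice of points x_0 ∈ S_0, …, x_{d−1} ∈ S_{d−1}, the tuple (x_0,…,x_{d−1}) is γ-fat shattered by H_d with witnesses s_j = 1/2 (in particular D^fat_γ(H_d) ≥ d); and (ii) for all distinct b, b' ∈ {0,1}^d and every x ∈ X, h_b(x) ≠ h_{b'}(x). -/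
open scoped ENat

namespace RealizableRegression

/-- A tuple `x` is `γ`-fat shattered by `H`: there are witnesses `s_i ∈ [0,1]` such that
every boolean pattern `b` is realized by some `h ∈ H` lying above `s_i + γ` where
`b i = true` and below `s_i − γ` where `b i = false`. -/
def FatShattered {X : Type*} (H : Set (X → ℝ)) (γ : ℝ) {n : ℕ} (x : Fin n → X) : Prop :=
  ∃ s : Fin n → ℝ, (∀ i, s i ∈ Set.Icc (0:ℝ) 1) ∧
    ∀ b : Fin n → Bool, ∃ h ∈ H,
      (∀ i, b i = true → s i + γ ≤ h (x i)) ∧ (∀ i, b i = false → h (x i) ≤ s i - γ)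

/-- The `γ`-fat shattering dimension: the largest size of a `γ`-fat shattered tuple. -/
noncomputable def fatDim {X : Type*} (H : Set (X → ℝ)) (γ : ℝ) : ℕ∞ :=
  ⨆ (n : ℕ) (x : Fin n → X) (_ : FatShattered H γ x), (n : ℕ∞)

/-- The hypothesis `h_b` of the example class:
`h_b(x) = (3/4) Σ_j 1_{S_j}(x) b_j + (1/8) Σ_k b_k 2^{−k}`. -/
noncomputable def exH {X : Type*} {d : ℕ} (S : Fin d → Set X) (b : Fin d → Bool) :
    X → ℝ :=
  fun x =>
    (3 / 4) * ∑ j : Fin d, (S j).indicator (fun _ => (1:ℝ)) x * (if b j then 1 else 0) +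
    (1 / 8) * ∑ k : Fin d, (if b k then (1:ℝ) else 0) / 2 ^ (k : ℕ)

/-- The "binary expansion" part of `exH`. -/
noncomputable def T {d : ℕ} (b : Fin d → Bool) : ℝ :=
  ∑ k : Fin d, (if b k then (1:ℝ) else 0) / 2 ^ (k : ℕ)

lemma T_nonneg {d : ℕ} (b : Fin d → Bool) : 0 ≤ T b := by
  apply Finset.sum_nonneg
  intro k _
  positivity

lemma T_lt_two {d : ℕ} (b : Fin d → Bool) : T b < 2 := by
  have h1 : T b ≤ ∑ k : Fin d, ((1:ℝ)/2) ^ (k : ℕ) := by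
    apply Finset.sum_le_sum
    intro k _
    rw [div_pow, one_pow]
    split
    · exact le_rfl
    · simp only [zero_div]; positivity
  have h2 : ∑ k : Fin d, ((1:ℝ)/2) ^ (k : ℕ) = ∑ k ∈ Finset.range d, ((1:ℝ)/2) ^ k :=
    Fin.sum_univ_eq_sum_range _ _
  have h3 : ∑ k ∈ Finset.range d, ((1:ℝ)/2) ^ k = ((1/2)^d - 1)/((1/2) - 1) := by
    apply geom_sum_eq; norm_num
  have h4 : (0:ℝ) < (1/2:ℝ)^d := by positivity
  have h5 : ((1/2:ℝ)^d - 1)/((1/2:ℝ) - 1) = 2 - 2*(1/2)^d := by ring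
  rw [h2, h3, h5] at h1
  linarith

lemma T_succ {d : ℕ} (b : Fin (d+1) → Bool) :
    T b = (if b 0 then (1:ℝ) else 0) + (1/2) * T (b ∘ Fin.succ) := by
  rw [T, Fin.sum_univ_succ]
  simp only [Fin.val_zero, pow_zero, div_one]
  congr 1
  rw [T, Finset.mul_sum]
  apply Finset.sum_congr rfl
  intro k _
  simp only [Function.comp_apply, Fin.val_succ]
  rw [pow_succ]
  ring

lemma T_inj {d : ℕ} : Function.Injective (T (d := d)) := by
  induction d with
  | zero => intro b b' _; funext k; exact absurd k.2 (by omega)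
  | succ n ih =>
    intro b b' h
    rw [T_succ, T_succ] at h
    have hA0 := T_nonneg (b ∘ Fin.succ)
    have hA2 := T_lt_two (b ∘ Fin.succ)
    have hB0 := T_nonneg (b' ∘ Fin.succ)
    have hB2 := T_lt_two (b' ∘ Fin.succ)
    have h0 : b 0 = b' 0 := by
      cases hb : b 0 <;> cases hb' : b' 0 <;> simp [hb, hb'] at h ⊢ <;> nlinarith
    rw [h0] at h
    have htail : b ∘ Fin.succ = b' ∘ Fin.succ := by
      apply ih
      cases b' 0 <;> simp at h <;> linarith
    funext k
    cases k using Fin.cases with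
    | zero => exact h0
    | succ j => exact congrFun htail j

lemma exH_eval {X : Type*} {d : ℕ} (S : Fin d → Set X)
    (hdisj : ∀ i j, i ≠ j → Disjoint (S i) (S j))
    {z : X} {j0 : Fin d} (hz : z ∈ S j0) (b : Fin d → Bool) :
    exH S b z = 3/4 * (if b j0 then (1:ℝ) else 0) + 1/8 * T b := by
  rw [exH, T]
  congr 1
  congr 1
  rw [Finset.sum_eq_single j0]
  · rw [Set.indicator_of_mem hz, one_mul]
  · intro j _ hj
    have : z ∉ S j := fun hmem => (hdisj j j0 hj).le_bot ⟨hmem, hz⟩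
    rw [Set.indicator_of_notMem this, zero_mul]
  · intro h; exact absurd (Finset.mem_univ j0) h

/-- Fat-shattering of the example class: for a partition
`S_0, …, S_{d−1}` of `X` and the class `H_d = {h_b}`, (i) every transversal
`(x_0, …, x_{d−1})` with `x_j ∈ S_j` is `γ`-fat shattered (witnesses `s_j = 1/2`) for
every `γ ∈ (0, 1/4]`, so `D^fat_γ(H_d) ≥ d`; and (ii) distinct hypotheses of `H_d`
differ at every point. -/
theorem statement18 {X : Type*} (d : ℕ) (S : Fin d → Set X)
    (hdisj : ∀ i j, i ≠ j → Disjoint (S i) (S j))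
    (hcover : (⋃ j, S j) = Set.univ)
    (γ : ℝ) (hγ : γ ∈ Set.Ioc (0:ℝ) (1/4))
    (x : Fin d → X) (hx : ∀ j, x j ∈ S j) :
    (∀ b : Fin d → Bool, ∃ h ∈ {g : X → ℝ | ∃ c : Fin d → Bool, g = exH S c},
      (∀ j, b j = true → 1/2 + γ ≤ h (x j)) ∧
      (∀ j, b j = false → h (x j) ≤ 1/2 - γ)) ∧
    ((d : ℕ∞) ≤ fatDim {g : X → ℝ | ∃ c : Fin d → Bool, g = exH S c} γ) ∧
    (∀ b b' : Fin d → Bool, b ≠ b' → ∀ z : X, exH S b z ≠ exH S b' z) := by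
  obtain ⟨hγ0, hγ4⟩ := hγ
  have main : ∀ b : Fin d → Bool, ∃ h ∈ {g : X → ℝ | ∃ c : Fin d → Bool, g = exH S c},
      (∀ j, b j = true → 1/2 + γ ≤ h (x j)) ∧
      (∀ j, b j = false → h (x j) ≤ 1/2 - γ) := by
    intro b
    refine ⟨exH S b, ⟨b, rfl⟩, ?_, ?_⟩
    · intro j hj
      rw [exH_eval S hdisj (hx j) b, hj]
      have := T_nonneg b
      simp only [if_true]
      linarith
    · intro j hj
      rw [exH_eval S hdisj (hx j) b, hj]
      have := T_lt_two b
      simp only [Bool.false_eq_true, if_false]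
      linarith
  refine ⟨main, ?_, ?_⟩
  · have hfs : FatShattered {g : X → ℝ | ∃ c : Fin d → Bool, g = exH S c} γ x :=
      ⟨fun _ => 1/2, fun _ => by norm_num, main⟩
    exact le_iSup_of_le d (le_iSup_of_le x (le_iSup_of_le hfs le_rfl))
  · intro b b' hne z
    have hz : z ∈ ⋃ j, S j := hcover ▸ Set.mem_univ z
    obtain ⟨_, ⟨j0, rfl⟩, hzj⟩ := hz
    rw [exH_eval S hdisj hzj b, exH_eval S hdisj hzj b']
    have hb0 := T_nonneg b
    have hb2 := T_lt_two b
    have hb'0 := T_nonneg b'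
    have hb'2 := T_lt_two b'
    intro heq
    by_cases h0 : b j0 = b' j0
    · rw [h0] at heq
      have : T b = T b' := by linarith [add_left_cancel heq]
      exact hne (T_inj this)
    · cases hb : b j0 <;> cases hb' : b' j0 <;>
        simp [hb, hb'] at h0 heq <;> nlinarith

end RealizableRegression
end
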